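/- Let X = (I,P) be a probabilistic coherence space and let t : Mfin(I) → [0,∞) satisfy Fun t(x) := Σ_μ t_μ x^μ ≤ 1 for all x ∈ P. Let p ∈ [0,1) and let x,y ∈ P with x ≤ y pointwise and ‖y‖_X ≤ p. Then 0 ≤ Fun t(y) − Fun t(x) ≤ ‖y−x‖_X / (1−p). -/

import Mathlib

/-
Write `y = s • z` and `y - x = r • w` with `z, w ∈ P`, `s < 1`, and put `c = (1 - s) / r`.
Then `x + (1 + c) • (y - x) = s • z + (1 - s) • w` lies in `P`, so `Fun t` is at most `1` there.
Along the ray `λ ↦ x + λ • (y - x)` every monomial, hence `Fun t`, is a power series in `λ`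
with nonnegative coefficients and thus convex; comparing its values at `λ = 0, 1, 1 + c` yields
`c * (Fun t y - Fun t x) ≤ 1`, i.e. `(Fun t y - Fun t x) * (1 - s) ≤ r`. Taking the infimum
over `r` and `s` gives the claim.
-/

open scoped ENNReal NNReal

noncomputable section

/-- ⟨u,u'⟩ = Σ_i u_i u'_i in [0,∞]. -/
def dotE {I : Type*} (u v : I → ℝ≥0∞) : ℝ≥0∞ := ∑' i, u i * v i

/-- The orthogonal P⊥ of a set P ⊆ [0,∞]^I. -/
def orthE {I : Type*} (P : Set (I → ℝ≥0∞)) : Set (I → ℝ≥0∞) :=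
  {v | ∀ u ∈ P, dotE u v ≤ 1}

/-- (I,P) is a probabilistic coherence space. -/
structure IsPCS {I : Type*} (P : Set (I → ℝ≥0∞)) : Prop where
  biorth : orthE (orthE P) = P
  nonzero : ∀ a, ∃ x ∈ P, 0 < x a
  bounded : ∀ a, ∃ m : ℝ≥0, ∀ x ∈ P, x a ≤ (m : ℝ≥0∞)

/-- The norm ‖x‖_X = inf{r > 0 | x ∈ rP}. -/
def pnorm {I : Type*} (P : Set (I → ℝ≥0∞)) (x : I → ℝ≥0∞) : ℝ≥0∞ :=
  sInf {r : ℝ≥0∞ | 0 < r ∧ ∃ z ∈ P, x = r • z}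

/-- x^μ = Π_{a∈I} x_a^{μ(a)}. -/
def mpow {I : Type*} (x : I → ℝ≥0∞) (μ : Multiset I) : ℝ≥0∞ := (μ.map x).prod

/-- The paper's `Fun t`. -/
def funOf {I : Type*} (t : Multiset I → ℝ≥0∞) (x : I → ℝ≥0∞) : ℝ≥0∞ :=
  ∑' μ, t μ * mpow x μ

section Monomials

variable {I : Type*}

lemma mpow_cons (x : I → ℝ≥0∞) (a : I) (μ : Multiset I) :
    mpow x (a ::ₘ μ) = x a * mpow x μ := by
  simp [mpow]

lemma mpow_mono {x y : I → ℝ≥0∞} (h : x ≤ y) (μ : Multiset I) : mpow x μ ≤ mpow y μ := by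
  induction μ using Multiset.induction with
  | empty => simp [mpow]
  | cons a μ ih => rw [mpow_cons, mpow_cons]; exact mul_le_mul' (h a) ih

lemma mpow_add_smul_le (x u : I → ℝ≥0∞) (c : ℝ≥0∞) (μ : Multiset I) :
    (1 + c) * mpow (x + u) μ ≤ mpow (x + (1 + c) • u) μ + c * mpow x μ := by
  induction μ using Multiset.induction with
  | empty => simp [mpow, add_comm]
  | cons a μ ih =>
    simp only [mpow_cons, Pi.add_apply, Pi.smul_apply, smul_eq_mul]
    have hmono : mpow (x + u) μ ≤ mpow (x + (1 + c) • u) μ :=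
      mpow_mono (add_le_add_right (fun i => le_mul_of_one_le_left zero_le le_self_add) x) μ
    calc (1 + c) * ((x a + u a) * mpow (x + u) μ)
        = x a * ((1 + c) * mpow (x + u) μ) + u a * ((1 + c) * mpow (x + u) μ) := by ring
      _ ≤ x a * (mpow (x + (1 + c) • u) μ + c * mpow x μ)
          + u a * ((1 + c) * mpow (x + (1 + c) • u) μ) := by gcongr
      _ = (x a + (1 + c) * u a) * mpow (x + (1 + c) • u) μ + c * (x a * mpow x μ) := by ring

lemma funOf_mono (t : Multiset I → ℝ≥0∞) {x y : I → ℝ≥0∞} (h : x ≤ y) :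
    funOf t x ≤ funOf t y :=
  ENNReal.tsum_le_tsum fun μ => mul_le_mul' le_rfl (mpow_mono h μ)

lemma funOf_add_smul_le (t : Multiset I → ℝ≥0∞) (x u : I → ℝ≥0∞) (c : ℝ≥0∞) :
    (1 + c) * funOf t (x + u) ≤ funOf t (x + (1 + c) • u) + c * funOf t x := by
  unfold funOf
  rw [← ENNReal.tsum_mul_left, ← ENNReal.tsum_mul_left, ← ENNReal.tsum_add]
  refine ENNReal.tsum_le_tsum fun μ => ?_
  calc (1 + c) * (t μ * mpow (x + u) μ) = t μ * ((1 + c) * mpow (x + u) μ) := by ring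
    _ ≤ t μ * (mpow (x + (1 + c) • u) μ + c * mpow x μ) := by gcongr; exact mpow_add_smul_le x u c μ
    _ = t μ * mpow (x + (1 + c) • u) μ + c * (t μ * mpow x μ) := by ring

end Monomials

lemma dotE_comm {I : Type*} (u v : I → ℝ≥0∞) : dotE u v = dotE v u :=
  tsum_congr fun _ => mul_comm _ _

lemma dotE_smul_add_smul {I : Type*} (v z w : I → ℝ≥0∞) (a b : ℝ≥0∞) :
    dotE v (a • z + b • w) = a * dotE v z + b * dotE v w := by
  simp only [dotE, Pi.add_apply, Pi.smul_apply, smul_eq_mul]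
  rw [← ENNReal.tsum_mul_left, ← ENNReal.tsum_mul_left, ← ENNReal.tsum_add]
  exact tsum_congr fun _ => by ring

lemma IsPCS.smul_add_one_sub_smul_mem {I : Type*} {P : Set (I → ℝ≥0∞)} (hP : IsPCS P)
    {z w : I → ℝ≥0∞} (hz : z ∈ P) (hw : w ∈ P) {s : ℝ≥0∞} (hs : s ≤ 1) :
    s • z + (1 - s) • w ∈ P := by
  rw [← hP.biorth]
  intro v hv
  rw [dotE_smul_add_smul]
  calc s * dotE v z + (1 - s) * dotE v w ≤ s * 1 + (1 - s) * 1 := by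
        gcongr
        · exact (dotE_comm v z).trans_le (hv z hz)
        · exact (dotE_comm v w).trans_le (hv w hw)
    _ = 1 := by rw [mul_one, mul_one, add_tsub_cancel_of_le hs]

lemma funOf_sub_mul_le {I : Type*} {P : Set (I → ℝ≥0∞)} (hP : IsPCS P)
    {t : Multiset I → ℝ≥0∞} (ht : ∀ z ∈ P, funOf t z ≤ 1)
    {x y z w : I → ℝ≥0∞} (hxy : x ≤ y) (hz : z ∈ P) (hw : w ∈ P)
    {s r : ℝ≥0∞} (hr : r ≠ 0) (hy : y = s • z) (hyx : y - x = r • w) :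
    (funOf t y - funOf t x) * (1 - s) ≤ r := by
  rcases le_or_gt 1 s with hs | hs
  · simp [tsub_eq_zero_of_le hs]
  rcases eq_or_ne r ⊤ with rfl | hrt
  · exact le_top
  set c := (1 - s) / r
  have hcr : c * r = 1 - s := ENNReal.div_mul_cancel hr hrt
  have hct : c ≠ ⊤ := ENNReal.div_ne_top (ENNReal.sub_ne_top ENNReal.one_ne_top) hr
  have hxy' : x + (y - x) = y := add_tsub_cancel_of_le hxy
  have hmem : x + (1 + c) • (y - x) ∈ P := by
    have hcomb : x + (1 + c) • (y - x) = s • z + (1 - s) • w := by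
      rw [add_smul, one_smul, ← add_assoc, hxy', hyx, hy, ← hcr, smul_smul]
    exact hcomb ▸ hP.smul_add_one_sub_smul_mem hz hw hs.le
  have hconv := funOf_add_smul_le t x (y - x) c
  rw [hxy'] at hconv
  have hcD : c * (funOf t y - funOf t x) ≤ 1 := by
    rw [ENNReal.mul_sub fun _ _ => hct, tsub_le_iff_right]
    calc c * funOf t y ≤ (1 + c) * funOf t y := by gcongr; exact le_add_self
      _ ≤ funOf t (x + (1 + c) • (y - x)) + c * funOf t x := hconv
      _ ≤ 1 + c * funOf t x := by gcongr; exact ht _ hmem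
  calc (funOf t y - funOf t x) * (1 - s) = c * (funOf t y - funOf t x) * r := by
        rw [← hcr]; ring
    _ ≤ 1 * r := by gcongr
    _ = r := one_mul r

lemma funOf_sub_mul_le_pnorm {I : Type*} {P : Set (I → ℝ≥0∞)} (hP : IsPCS P)
    {t : Multiset I → ℝ≥0∞} (ht : ∀ z ∈ P, funOf t z ≤ 1)
    {x y z : I → ℝ≥0∞} (hxy : x ≤ y) (hz : z ∈ P) {s : ℝ≥0∞} (hy : y = s • z) :
    (funOf t y - funOf t x) * (1 - s) ≤ pnorm P (y - x) := by
  refine le_sInf ?_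
  rintro r ⟨hr, w, hw, hyx⟩
  exact funOf_sub_mul_le hP ht hxy hz hw hr.ne' hy hyx

lemma ENNReal.mul_tsub_sInf_le {S : Set ℝ≥0∞} {a b q : ℝ≥0∞}
    (h : ∀ s ∈ S, a * (b - s) ≤ q) : a * (b - sInf S) ≤ q := by
  rw [sInf_eq_iInf', ENNReal.sub_iInf, ENNReal.mul_iSup]
  exact iSup_le fun s => h s s.2

theorem stmt11_general {I : Type*}
    (P : Set (I → ℝ≥0∞)) (hP : IsPCS P)
    (t : Multiset I → ℝ≥0∞)
    (ht : ∀ z ∈ P, ∑' μ : Multiset I, t μ * mpow z μ ≤ 1)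
    (p : ℝ≥0∞) (hp : p < 1)
    (x y : I → ℝ≥0∞) (hxy : x ≤ y)
    (hyp : pnorm P y ≤ p) :
    (∑' μ : Multiset I, t μ * mpow x μ) ≤ (∑' μ : Multiset I, t μ * mpow y μ) ∧
    (∑' μ : Multiset I, t μ * mpow y μ) - (∑' μ : Multiset I, t μ * mpow x μ) ≤
      pnorm P (y - x) / (1 - p) := by
  refine ⟨funOf_mono t hxy, ?_⟩
  have h1p : 1 - p ≠ 0 := (tsub_pos_of_lt hp).ne'
  rw [ENNReal.le_div_iff_mul_le (Or.inl h1p) (Or.inl (ENNReal.sub_ne_top ENNReal.one_ne_top))]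
  calc (funOf t y - funOf t x) * (1 - p) ≤ (funOf t y - funOf t x) * (1 - pnorm P y) := by
        gcongr
    _ ≤ pnorm P (y - x) := ENNReal.mul_tsub_sInf_le fun s ⟨_, z, hz, hy⟩ =>
        funOf_sub_mul_le_pnorm hP ht hxy hz hy

/-- For t : !X ⊸ 1, p ∈ [0,1), x ≤ y in P with ‖y‖_X ≤ p:
0 ≤ Fun t(y) − Fun t(x) ≤ ‖y−x‖_X/(1−p). -/
theorem stmt11 {I : Type*} [Countable I]
    (P : Set (I → ℝ≥0∞)) (hP : IsPCS P)
    (t : Multiset I → ℝ≥0∞) (htfin : ∀ μ, t μ ≠ ⊤)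
    (ht : ∀ z ∈ P, ∑' μ : Multiset I, t μ * mpow z μ ≤ 1)
    (p : ℝ≥0∞) (hp : p < 1)
    (x y : I → ℝ≥0∞) (hx : x ∈ P) (hy : y ∈ P) (hxy : x ≤ y)
    (hyp : pnorm P y ≤ p) :
    (∑' μ : Multiset I, t μ * mpow x μ) ≤ (∑' μ : Multiset I, t μ * mpow y μ) ∧
    (∑' μ : Multiset I, t μ * mpow y μ) - (∑' μ : Multiset I, t μ * mpow x μ) ≤
      pnorm P (y - x) / (1 - p) :=
  stmt11_general P hP t ht p hp x y hxy hyp
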